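/- Let K be a field, A ∈ K[x]^{n×n} non-singular of degree less than d with determinantal degree ν = deg det A ≠ 0, and B ∈ K[x]^{p×n}. Then there exist a surjective map σ : K[x]^{n×p} → K^{ν×p}, and constant matrices X ∈ K^{p×ν} and A_o ∈ K^{ν×ν}, such that for every P ∈ K[x]^{n×p} one has B A^{-1} P = Q + X (xI_ν − A_o)^{-1} σ(P) in K(x)^{p×p} for some polynomial matrix Q ∈ K[x]^{p×p} (depending on P), where moreover the restriction of σ to matrices of degree at most d−1 is surjective. Additionally, a non-singular matrix S ∈ K[x]^{p×p} is the denominator of a left coprime fraction description of B A^{-1} if and only if S is the denominator of a left coprime fraction description of X (xI_ν − A_o)^{-1}. -/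

import Mathlib

/-!
The state space is the cokernel `V = K[x]^n / A K[x]^n`, of `K`-dimension `deg det A` by the Smith
normal form. Since `B A⁻¹ A = B` is polynomial, `w ↦ (strictly proper part of B A⁻¹ w)` induces a
`K`-linear `φ : V → K(x)^p`, and `φ (x v)` is the strictly proper part of `x φ v`. For a basis `b`
of `V`, `A_o` the matrix of `v ↦ x v` and `Φ` the matrix with columns `φ (b k)`, this gives
`Φ (x I - A_o) = X` with `X` constant, because `x Φ - Φ A_o` is polynomial and of degree `≤ 0`.
Splitting `B A⁻¹ P` into polynomial and strictly proper parts gives `B A⁻¹ P = Q + Φ σ(P)`, where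
`σ(P)` are the coordinates of the classes of the columns of `P`; representatives of degree
`< deg A` exist because `w - A ⌊A⁻¹ w⌋ = A (A⁻¹ w - ⌊A⁻¹ w⌋)`, with `⌊·⌋` the polynomial part.
Finally `B A⁻¹` and `Φ` are polynomial combinations of each other, so they have the same left
coprime denominators.
-/

open Polynomial Matrix

namespace PolyNull

variable {K : Type*} [Field K]

/-- Degree of a polynomial row vector: max of `natDegree` of its entries. -/
noncomputable def vecDeg {m : Type*} [Fintype m] (v : m → Polynomial K) : ℕ :=
  Finset.univ.sup fun i => (v i).natDegree

/-- Degree of a polynomial matrix: max of degrees of its entries. -/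
noncomputable def matDeg {m n : Type*} [Fintype m] [Fintype n]
    (M : Matrix m n (Polynomial K)) : ℕ :=
  Finset.univ.sup fun ij : m × n => (M ij.1 ij.2).natDegree

/-- View a polynomial matrix as a matrix over the rational function field `K(x)`. -/
noncomputable def ratMat {m n : Type*} (M : Matrix m n (Polynomial K)) :
    Matrix m n (RatFunc K) :=
  M.map (algebraMap (Polynomial K) (RatFunc K))

/-- Rank of a polynomial matrix (its rank over `K(x)`). -/
noncomputable def polyRank {m n : Type*} [Fintype m] [Fintype n]
    (M : Matrix m n (Polynomial K)) : ℕ :=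
  (ratMat M).rank

/-- The left nullspace `K[x]`-module of a polynomial matrix. -/
noncomputable def leftNullMod {m n : Type*} [Fintype m] (M : Matrix m n (Polynomial K)) :
    Submodule (Polynomial K) (m → Polynomial K) :=
  LinearMap.ker M.vecMulLinear

/-- `N` is a family of rows forming a basis of the left nullspace module of `M`. -/
def IsNullBasis {m n ι : Type*} [Fintype m] (M : Matrix m n (Polynomial K))
    (N : ι → (m → Polynomial K)) : Prop :=
  LinearIndependent (Polynomial K) N ∧
    Submodule.span (Polynomial K) (Set.range N) = leftNullMod M

/-- Minimal basis of the left nullspace module: a basis whose sorted row degrees are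
pointwise minimal among all bases; equivalently (order-free formulation), for every
degree threshold it has at least as many rows of degree at most the threshold as
any other basis. -/
def IsMinimalNullBasis {m n ι : Type*} [Fintype m] [Fintype ι]
    (M : Matrix m n (Polynomial K)) (N : ι → (m → Polynomial K)) : Prop :=
  IsNullBasis M N ∧
    ∀ N' : ι → (m → Polynomial K), IsNullBasis M N' →
      ∀ δ : ℕ, (Finset.univ.filter fun i => vecDeg (N' i) ≤ δ).card
        ≤ (Finset.univ.filter fun i => vecDeg (N i) ≤ δ).card

open scoped Classical in
/-- McMillan degree of a rank-`r` polynomial matrix: the maximum of the degrees of the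
determinants of its `r × r` submatrices. -/
noncomputable def mcMillanDeg {m n : Type*} [Fintype m] [Fintype n]
    (M : Matrix m n (Polynomial K)) (r : ℕ) : ℕ :=
  Finset.univ.sup fun fg : (Fin r → m) × (Fin r → n) =>
    if Function.Injective fg.1 ∧ Function.Injective fg.2 then
      (M.submatrix fg.1 fg.2).det.natDegree
    else 0

/-- Rank of the evaluation of a polynomial matrix at a point of the algebraic closure. -/
noncomputable def evalRank {m n : Type*} [Fintype n]
    (M : Matrix m n (Polynomial K)) (x₀ : AlgebraicClosure K) : ℕ :=
  (M.map fun f => Polynomial.aeval x₀ f).rank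

/-- A polynomial matrix is irreducible (for its rank `r`) if it has rank `r` at every
point of the algebraic closure of `K`. -/
def IsIrreducibleMat {m n : Type*} [Fintype n]
    (M : Matrix m n (Polynomial K)) (r : ℕ) : Prop :=
  ∀ x₀ : AlgebraicClosure K, evalRank M x₀ = r

/-- Leading row coefficient matrix of a polynomial matrix. -/
noncomputable def leadingRowMatrix {k m : Type*} [Fintype m]
    (N : Matrix k m (Polynomial K)) : Matrix k m K :=
  fun i j => (N i j).coeff (vecDeg (N i))

/-- A polynomial matrix is row-reduced if its leading row coefficient matrix has full
row rank. -/
def IsRowReduced {k m : Type*} [Fintype k] [Fintype m]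
    (N : Matrix k m (Polynomial K)) : Prop :=
  (leadingRowMatrix N).rank = Fintype.card k

/-- `S` and `N` are left coprime: every non-singular common left divisor is unimodular. -/
def LeftCoprime {p n : Type*} [Fintype p] [DecidableEq p]
    (S : Matrix p p (Polynomial K)) (N : Matrix p n (Polynomial K)) : Prop :=
  ∀ U : Matrix p p (Polynomial K), U.det ≠ 0 →
    (∃ S', S = U * S') → (∃ N', N = U * N') → IsUnit U.det

/-- `C` and `T` are right coprime: every non-singular common right divisor is unimodular. -/
def RightCoprime {p n : Type*} [Fintype p] [DecidableEq p]
    (C : Matrix n p (Polynomial K)) (T : Matrix p p (Polynomial K)) : Prop :=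
  ∀ U : Matrix p p (Polynomial K), U.det ≠ 0 →
    (∃ C', C = C' * U) → (∃ T', T = T' * U) → IsUnit U.det

/-- `S` is the denominator of a left coprime fraction description of `H`. -/
noncomputable def IsLeftCoprimeDenom {p n : Type*} [Fintype p] [DecidableEq p]
    (S : Matrix p p (Polynomial K)) (H : Matrix p n (RatFunc K)) : Prop :=
  S.det ≠ 0 ∧ ∃ N : Matrix p n (Polynomial K), ratMat S * H = ratMat N ∧ LeftCoprime S N

open Module

def intDegreeLE (c : ℤ) : Submodule K (RatFunc K) where
  carrier := {f | f = 0 ∨ f.intDegree ≤ c}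
  zero_mem' := Or.inl rfl
  add_mem' := by
    rintro f g (rfl | hf) (rfl | hg)
    · simp
    · simpa using Or.inr hg
    · simpa using Or.inr hf
    · by_cases hfg : f + g = 0
      · exact Or.inl hfg
      by_cases hg0 : g = 0
      · simpa [hg0] using Or.inr hf
      exact Or.inr ((RatFunc.intDegree_add_le hg0 hfg).trans (max_le hf hg))
  smul_mem' := by
    rintro a f (rfl | hf)
    · simp
    by_cases ha : a = 0
    · simp [ha]
    by_cases hf0 : f = 0
    · simp [hf0]
    right
    have ha' : algebraMap K (RatFunc K) a ≠ 0 := by simpa using ha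
    rw [Algebra.smul_def, RatFunc.intDegree_mul ha' hf0,
      IsScalarTower.algebraMap_apply K K[X] (RatFunc K), RatFunc.intDegree_polynomial]
    simpa using hf

lemma mem_intDegreeLE {c : ℤ} {f : RatFunc K} : f ∈ intDegreeLE c ↔ f = 0 ∨ f.intDegree ≤ c :=
  Iff.rfl

lemma intDegreeLE_mono {a b : ℤ} (h : a ≤ b) : intDegreeLE (K := K) a ≤ intDegreeLE b :=
  fun _ hf => hf.imp_right (·.trans h)

lemma mul_mem_intDegreeLE {a b : ℤ} {f g : RatFunc K} (hf : f ∈ intDegreeLE a)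
    (hg : g ∈ intDegreeLE b) : f * g ∈ intDegreeLE (a + b) := by
  rcases hf with rfl | hf
  · simp
  rcases hg with rfl | hg
  · simp
  by_cases hf0 : f = 0
  · simp [hf0]
  by_cases hg0 : g = 0
  · simp [hg0]
  exact Or.inr (by rw [RatFunc.intDegree_mul hf0 hg0]; omega)

lemma algebraMap_mem_intDegreeLE_iff {c : ℤ} {q : K[X]} :
    algebraMap K[X] (RatFunc K) q ∈ intDegreeLE c ↔ q = 0 ∨ (q.natDegree : ℤ) ≤ c := by
  simp [mem_intDegreeLE, RatFunc.intDegree_polynomial]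

abbrev strictlyProper : Submodule K (RatFunc K) := intDegreeLE (-1)

lemma algebraMap_mem_strictlyProper_iff {q : K[X]} :
    algebraMap K[X] (RatFunc K) q ∈ strictlyProper ↔ q = 0 := by
  rw [algebraMap_mem_intDegreeLE_iff]
  exact or_iff_left (by omega)

noncomputable def polPart (f : RatFunc K) : K[X] := f.num /ₘ f.denom

lemma sub_polPart_mem_strictlyProper (f : RatFunc K) :
    f - algebraMap K[X] (RatFunc K) (polPart f) ∈ strictlyProper := by
  have hden : algebraMap K[X] (RatFunc K) f.denom ≠ 0 := by simpa using f.denom_ne_zero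
  have hrem : f - algebraMap K[X] (RatFunc K) (polPart f) =
      algebraMap K[X] (RatFunc K) (f.num %ₘ f.denom) / algebraMap K[X] (RatFunc K) f.denom := by
    have hf := (div_eq_iff hden).1 f.num_div_denom
    have hdiv := congrArg (algebraMap K[X] (RatFunc K)) (modByMonic_add_div f.num f.denom)
    rw [map_add, map_mul] at hdiv
    rw [eq_div_iff hden, polPart]
    linear_combination -hf - hdiv
  rw [hrem]
  by_cases hr : f.num %ₘ f.denom = 0
  · simp [hr]
  have hlt := natDegree_lt_natDegree hr (degree_modByMonic_lt f.num f.monic_denom)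
  right
  rw [div_eq_mul_inv, RatFunc.intDegree_mul (by simpa using hr) (inv_ne_zero hden),
    RatFunc.intDegree_inv, RatFunc.intDegree_polynomial, RatFunc.intDegree_polynomial]
  omega

lemma algebraMap_smul_polynomial (a : K) (q : K[X]) :
    algebraMap K[X] (RatFunc K) (a • q) = a • algebraMap K[X] (RatFunc K) q :=
  map_smul (IsScalarTower.toAlgHom K K[X] (RatFunc K)) a q

lemma algebraMap_C (a : K) :
    algebraMap K[X] (RatFunc K) (C a) = algebraMap K (RatFunc K) a :=
  (IsScalarTower.algebraMap_apply K K[X] (RatFunc K) a).symm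

lemma polPart_eq_of_sub_mem {f : RatFunc K} {q : K[X]}
    (h : f - algebraMap K[X] (RatFunc K) q ∈ strictlyProper) : polPart f = q := by
  rw [← sub_eq_zero, ← algebraMap_mem_strictlyProper_iff, map_sub]
  simpa using sub_mem h (sub_polPart_mem_strictlyProper f)

noncomputable def properPart : RatFunc K →ₗ[K] RatFunc K where
  toFun f := f - algebraMap K[X] (RatFunc K) (polPart f)
  map_add' f g := by
    have : polPart (f + g) = polPart f + polPart g := polPart_eq_of_sub_mem <| by
      simpa [add_sub_add_comm] using
        add_mem (sub_polPart_mem_strictlyProper f) (sub_polPart_mem_strictlyProper g)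
    rw [this, map_add]
    ring
  map_smul' a f := by
    have : polPart (a • f) = a • polPart f := polPart_eq_of_sub_mem <| by
      simpa [smul_sub, algebraMap_smul_polynomial] using
        Submodule.smul_mem _ a (sub_polPart_mem_strictlyProper f)
    simp [this, smul_sub, algebraMap_smul_polynomial]

lemma properPart_apply (f : RatFunc K) :
    properPart f = f - algebraMap K[X] (RatFunc K) (polPart f) := rfl

lemma algebraMap_polPart_add_properPart (f : RatFunc K) :
    algebraMap K[X] (RatFunc K) (polPart f) + properPart f = f := by
  rw [properPart_apply, add_sub_cancel]

lemma properPart_mem (f : RatFunc K) : properPart f ∈ strictlyProper :=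
  sub_polPart_mem_strictlyProper f

lemma properPart_add_algebraMap (f : RatFunc K) (q : K[X]) :
    properPart (f + algebraMap K[X] (RatFunc K) q) = properPart f := by
  have hsub : f + algebraMap K[X] (RatFunc K) q - algebraMap K[X] (RatFunc K) (polPart f + q) =
      properPart f := by
    rw [properPart_apply, map_add]
    ring
  have hpol : polPart (f + algebraMap K[X] (RatFunc K) q) = polPart f + q :=
    polPart_eq_of_sub_mem (hsub ▸ properPart_mem f)
  rw [properPart_apply, properPart_apply, hpol, map_add]
  ring

lemma properPart_algebraMap (q : K[X]) : properPart (algebraMap K[X] (RatFunc K) q) = 0 := by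
  simpa using properPart_add_algebraMap (0 : RatFunc K) q

lemma properPart_algebraMap_mul_properPart (q : K[X]) (f : RatFunc K) :
    properPart (algebraMap K[X] (RatFunc K) q * properPart f) =
      properPart (algebraMap K[X] (RatFunc K) q * f) := by
  conv_rhs => rw [← algebraMap_polPart_add_properPart f, mul_add, ← map_mul, add_comm,
    properPart_add_algebraMap]

lemma polPart_X_mul_eq_C {f : RatFunc K} (hf : f ∈ strictlyProper) :
    polPart (algebraMap K[X] (RatFunc K) X * f) =
      C ((polPart (algebraMap K[X] (RatFunc K) X * f)).coeff 0) := by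
  set g := algebraMap K[X] (RatFunc K) X * f
  have hg : g ∈ intDegreeLE 0 := by
    have := mul_mem_intDegreeLE
      (algebraMap_mem_intDegreeLE_iff.2 (Or.inr (le_refl ((X : K[X]).natDegree : ℤ)))) hf
    rwa [natDegree_X, Nat.cast_one, add_neg_cancel] at this
  have hpol : algebraMap K[X] (RatFunc K) (polPart g) ∈ intDegreeLE 0 := by
    rw [← sub_eq_iff_eq_add.2 (algebraMap_polPart_add_properPart g).symm]
    exact sub_mem hg (intDegreeLE_mono (by norm_num) (properPart_mem g))
  rcases algebraMap_mem_intDegreeLE_iff.1 hpol with h | h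
  · simp [h]
  · exact eq_C_of_natDegree_eq_zero (by omega)

section RatMat

variable {l m n : Type*}

lemma ratMat_add (M N : Matrix m n K[X]) : ratMat (M + N) = ratMat M + ratMat N :=
  Matrix.map_add _ (map_add _) M N

lemma ratMat_neg (M : Matrix m n K[X]) : ratMat (-M) = -ratMat M :=
  Matrix.map_neg _ (map_neg _) M

lemma ratMat_mul [Fintype m] (M : Matrix l m K[X]) (N : Matrix m n K[X]) :
    ratMat (M * N) = ratMat M * ratMat N :=
  Matrix.map_mul

lemma ratMat_one [Fintype m] [DecidableEq m] : ratMat (1 : Matrix m m K[X]) = 1 :=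
  Matrix.map_one _ (map_zero _) (map_one _)

lemma ratMat_injective : Function.Injective (ratMat : Matrix m n K[X] → Matrix m n (RatFunc K)) :=
  Matrix.map_injective (IsFractionRing.injective K[X] (RatFunc K))

lemma ratMat_map_C (Y : Matrix m n K) : ratMat (Y.map C) = Y.map (algebraMap K (RatFunc K)) := by
  ext i j
  simp [ratMat]

lemma ratMat_mulVec [Fintype n] (M : Matrix m n K[X]) (v : n → K[X]) :
    ratMat M *ᵥ (algebraMap K[X] (RatFunc K) ∘ v) = algebraMap K[X] (RatFunc K) ∘ (M *ᵥ v) :=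
  funext fun i => (RingHom.map_mulVec _ M v i).symm

lemma isUnit_det_ratMat [Fintype m] [DecidableEq m] {M : Matrix m m K[X]} (hM : M.det ≠ 0) :
    IsUnit (ratMat M).det := by
  rw [ratMat, ← RingHom.mapMatrix_apply, ← RingHom.map_det, isUnit_iff_ne_zero]
  exact (map_ne_zero_iff _ (IsFractionRing.injective K[X] (RatFunc K))).2 hM

end RatMat

section Coprime

variable {p m n : Type*} [Fintype p] [DecidableEq p] [Fintype m] [Fintype n]
  {S : Matrix p p K[X]} {G : Matrix p m (RatFunc K)} {H : Matrix p n (RatFunc K)}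

lemma IsLeftCoprimeDenom.of_eq_mul_add {W : Matrix n m K[X]} {Q : Matrix p m K[X]}
    {W' : Matrix m n K[X]} {Q' : Matrix p n K[X]}
    (hG : G = H * ratMat W + ratMat Q) (hH : H = G * ratMat W' + ratMat Q')
    (h : IsLeftCoprimeDenom S H) : IsLeftCoprimeDenom S G := by
  obtain ⟨hS, N, hSN, hcop⟩ := h
  have hSG : ratMat S * G = ratMat (N * W + S * Q) := by
    rw [hG, Matrix.mul_add, ← Matrix.mul_assoc, hSN, ratMat_add, ratMat_mul, ratMat_mul]
  refine ⟨hS, N * W + S * Q, hSG, ?_⟩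
  -- the witnesses of `LeftCoprime` are elaborated as `CStarMatrix`; restate them as matrices
  rintro U hU ⟨S', hS'⟩ ⟨N' : Matrix p m K[X], hN' : N * W + S * Q = U * N'⟩
  have hN : N = (N * W + S * Q) * W' + S * Q' := ratMat_injective <| by
    rw [ratMat_add, ratMat_mul, ratMat_mul, ← hSG, ← hSN, hH, Matrix.mul_add, Matrix.mul_assoc]
  have hUN : N = U * (N' * W' + S' * Q') := by
    rw [hN, hN', hS', Matrix.mul_add, Matrix.mul_assoc, Matrix.mul_assoc]
  exact hcop U hU ⟨S', hS'⟩ ⟨_, hUN⟩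

lemma isLeftCoprimeDenom_iff_of_eq_mul_add {W : Matrix n m K[X]} {Q : Matrix p m K[X]}
    {W' : Matrix m n K[X]} {Q' : Matrix p n K[X]}
    (hG : G = H * ratMat W + ratMat Q) (hH : H = G * ratMat W' + ratMat Q') :
    IsLeftCoprimeDenom S H ↔ IsLeftCoprimeDenom S G :=
  ⟨.of_eq_mul_add hG hH, .of_eq_mul_add hH hG⟩

end Coprime

section Cokernel

variable {ι : Type*} [Fintype ι] [DecidableEq ι]

abbrev Coker (A : Matrix ι ι K[X]) := (ι → K[X]) ⧸ LinearMap.range A.mulVecLin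

lemma mulVecLin_injective {A : Matrix ι ι K[X]} (hA : A.det ≠ 0) :
    Function.Injective A.mulVecLin := by
  rw [← LinearMap.ker_eq_bot, LinearMap.ker_eq_bot']
  intro v hv
  by_contra hv0
  exact hA (exists_mulVec_eq_zero_iff.1 ⟨v, hv0, hv⟩)

lemma finrank_range_mulVecLin {A : Matrix ι ι K[X]} (hA : A.det ≠ 0) :
    finrank K[X] (LinearMap.range A.mulVecLin) = finrank K[X] (ι → K[X]) :=
  LinearMap.finrank_range_of_inj (mulVecLin_injective hA)

lemma associated_det_prod_smithNormalFormCoeffs {A : Matrix ι ι K[X]} (hA : A.det ≠ 0) :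
    Associated A.det
      (∏ i, Submodule.smithNormalFormCoeffs (Pi.basisFun K[X] ι)
        (finrank_range_mulVecLin hA) i) := by
  set h := finrank_range_mulVecLin hA
  set top := Submodule.smithNormalFormTopBasis (Pi.basisFun K[X] ι) h
  set bot := Submodule.smithNormalFormBotBasis (Pi.basisFun K[X] ι) h
  set a := Submodule.smithNormalFormCoeffs (Pi.basisFun K[X] ι) h
  let e : (ι → K[X]) ≃ₗ[K[X]] LinearMap.range A.mulVecLin :=
    LinearEquiv.ofInjective _ (mulVecLin_injective hA)
  have hdetA : A.det = LinearMap.det A.mulVecLin := by rw [← toLin'_apply', LinearMap.det_toLin']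
  rw [hdetA, ← det_diagonal, ← LinearMap.det_toLin top]
  have hcomp : toLin top top (diagonal a) =
      A.mulVecLin ∘ₗ ((top.equiv bot (Equiv.refl ι)).trans e.symm).toLinearMap := by
    refine top.ext fun i => ?_
    have he : A.mulVecLin (e.symm (bot i)) = bot i :=
      congrArg Subtype.val (e.apply_symm_apply (bot i))
    simp [toLin_self, diagonal_apply, he, bot, top, a]
  exact (LinearMap.associated_det_of_eq_comp _ _ _ fun v => congrArg (· v) hcomp).symm

lemma finite_quotient_span_singleton {q : K[X]} (hq : q ≠ 0) :
    Module.Finite K (K[X] ⧸ Ideal.span {q}) :=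
  (AdjoinRoot.powerBasis hq).finite

lemma finite_coker {A : Matrix ι ι K[X]} (hA : A.det ≠ 0) : Module.Finite K (Coker A) :=
  have h := finrank_range_mulVecLin hA
  have := fun i => finite_quotient_span_singleton
    (Submodule.smithNormalFormCoeffs_ne_zero (Pi.basisFun K[X] ι) h i)
  Module.Finite.equiv (Submodule.quotientEquivDirectSum K (Pi.basisFun K[X] ι) h).symm

lemma finrank_coker {A : Matrix ι ι K[X]} (hA : A.det ≠ 0) :
    finrank K (Coker A) = A.det.natDegree := by
  have h := finrank_range_mulVecLin hA
  have ha := Submodule.smithNormalFormCoeffs_ne_zero (Pi.basisFun K[X] ι) h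
  have := fun i => finite_quotient_span_singleton (ha i)
  rw [natDegree_eq_of_degree_eq
      (degree_eq_degree_of_associated (associated_det_prod_smithNormalFormCoeffs hA)),
    natDegree_prod _ _ fun i _ => ha i, Submodule.finrank_quotient_eq_sum K (Pi.basisFun K[X] ι) h]
  exact Finset.sum_congr rfl fun i _ => (AdjoinRoot.powerBasis (ha i)).finrank

lemma exists_natDegree_sub_mulVec_le {A : Matrix ι ι K[X]} (hA : A.det ≠ 0) (w : ι → K[X]) :
    ∃ g : ι → K[X], ∀ i, ((w - A *ᵥ g) i).natDegree ≤ matDeg A - 1 := by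
  set u := (ratMat A)⁻¹ *ᵥ (algebraMap K[X] (RatFunc K) ∘ w)
  refine ⟨polPart ∘ u, fun i => ?_⟩
  -- `w - A ⌊A⁻¹ w⌋ = A (A⁻¹ w - ⌊A⁻¹ w⌋)` has degree `< deg A`
  have hvec : algebraMap K[X] (RatFunc K) ∘ (w - A *ᵥ (polPart ∘ u)) =
      ratMat A *ᵥ (properPart ∘ u) := by
    have hw : ratMat A *ᵥ u = algebraMap K[X] (RatFunc K) ∘ w := by
      rw [mulVec_mulVec, mul_nonsing_inv _ (isUnit_det_ratMat hA), one_mulVec]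
    have hu : properPart ∘ u = u - algebraMap K[X] (RatFunc K) ∘ polPart ∘ u :=
      funext fun k => properPart_apply (u k)
    rw [hu, mulVec_sub, hw, ratMat_mulVec]
    ext k
    simp
  have hmem : algebraMap K[X] (RatFunc K) ((w - A *ᵥ (polPart ∘ u)) i) ∈
      intDegreeLE ((matDeg A : ℤ) + -1) := by
    rw [← Function.comp_apply (f := algebraMap K[X] (RatFunc K)), hvec]
    refine Submodule.sum_mem _ fun k _ => mul_mem_intDegreeLE ?_ (properPart_mem (u k))
    refine algebraMap_mem_intDegreeLE_iff.2 (Or.inr ?_)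
    exact_mod_cast Finset.le_sup (f := fun ij : ι × ι => (A ij.1 ij.2).natDegree)
      (Finset.mem_univ (i, k))
  rcases algebraMap_mem_intDegreeLE_iff.1 hmem with h | h
  · simp [h]
  · omega

lemma exists_mkQ_eq_natDegree_le {A : Matrix ι ι K[X]} (hA : A.det ≠ 0) (v : Coker A) :
    ∃ w : ι → K[X], Submodule.mkQ _ w = v ∧ ∀ i, (w i).natDegree ≤ matDeg A - 1 := by
  obtain ⟨w, rfl⟩ := Submodule.mkQ_surjective _ v
  obtain ⟨g, hg⟩ := exists_natDegree_sub_mulVec_le hA w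
  refine ⟨w - A *ᵥ g, ?_, hg⟩
  rw [map_sub, sub_eq_self, Submodule.mkQ_apply, Submodule.Quotient.mk_eq_zero]
  exact ⟨g, rfl⟩

end Cokernel

lemma ratMat_charmatrix_apply {ν : Type*} [Fintype ν] [DecidableEq ν] (M : Matrix ν ν K) (j k : ν) :
    ratMat (charmatrix M) j k =
      (if j = k then algebraMap K[X] (RatFunc K) X else 0) - algebraMap K (RatFunc K) (M j k) := by
  rw [ratMat, map_apply, charmatrix_apply, map_sub, diagonal_apply, algebraMap_C]
  split_ifs <;> simp

lemma isUnit_det_ratMat_charmatrix {ν : Type*} [Fintype ν] [DecidableEq ν] (M : Matrix ν ν K) :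
    IsUnit (ratMat (charmatrix M)).det :=
  isUnit_det_ratMat (charpoly_monic M).ne_zero

lemma of_apply_mul_ratMat_charmatrix {V ν κ : Type*} [AddCommGroup V] [Module K V] [Fintype ν]
    [DecidableEq ν] (b : Basis ν K V) (T : V →ₗ[K] V) (φ : V →ₗ[K] (κ → RatFunc K))
    (hφ : ∀ v i, φ v i ∈ strictlyProper)
    (hT : ∀ v i, φ (T v) i = properPart (algebraMap K[X] (RatFunc K) X * φ v i)) :
    Matrix.of (fun i k => φ (b k) i) * ratMat (charmatrix (LinearMap.toMatrix b b T)) =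
      (Matrix.of fun i k => (polPart (algebraMap K[X] (RatFunc K) X * φ (b k) i)).coeff 0).map
        (algebraMap K (RatFunc K)) := by
  ext i k
  have hTb : φ (T (b k)) i =
      ∑ j, φ (b j) i * algebraMap K (RatFunc K) (LinearMap.toMatrix b b T j k) := by
    conv_lhs => rw [← toLin_toMatrix b b T, toLin_self]
    simp [Algebra.smul_def, mul_comm]
  have hX := algebraMap_polPart_add_properPart (algebraMap K[X] (RatFunc K) X * φ (b k) i)
  rw [polPart_X_mul_eq_C (hφ (b k) i), ← hT, hTb] at hX
  rw [mul_apply]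
  simp only [ratMat_charmatrix_apply, mul_sub, mul_ite, mul_zero, Finset.sum_sub_distrib,
    Finset.sum_ite_eq', Finset.mem_univ, if_true, of_apply, map_apply]
  rw [algebraMap_C] at hX
  linear_combination -hX

section Realization

variable {ι κ : Type*} [Fintype ι] {A : Matrix ι ι K[X]} {H : Matrix κ ι (RatFunc K)}

def IsProperPartLift (H : Matrix κ ι (RatFunc K)) (φ : Coker A →ₗ[K] (κ → RatFunc K)) : Prop :=
  ∀ w, φ (Submodule.mkQ _ w) = properPart ∘ (H *ᵥ (algebraMap K[X] (RatFunc K) ∘ w))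

lemma exists_isProperPartLift {B : Matrix κ ι K[X]} (hH : H * ratMat A = ratMat B) :
    ∃ φ : Coker A →ₗ[K] (κ → RatFunc K), IsProperPartLift H φ := by
  let φ₀ : (ι → K[X]) →ₗ[K] (κ → RatFunc K) := properPart.compLeft κ ∘ₗ
    H.mulVecLin.restrictScalars K ∘ₗ
      (IsScalarTower.toAlgHom K K[X] (RatFunc K)).toLinearMap.compLeft ι
  have hker : (LinearMap.range A.mulVecLin).restrictScalars K ≤ LinearMap.ker φ₀ := by
    rintro _ ⟨u, rfl⟩
    change properPart ∘ (H *ᵥ (algebraMap K[X] (RatFunc K) ∘ (A *ᵥ u))) = 0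
    rw [← ratMat_mulVec, mulVec_mulVec, hH, ratMat_mulVec]
    exact funext fun i => properPart_algebraMap _
  refine ⟨((LinearMap.range A.mulVecLin).restrictScalars K).liftQ φ₀ hker ∘ₗ
    (Submodule.Quotient.restrictScalarsEquiv K _).symm.toLinearMap, fun w => ?_⟩
  simp only [LinearMap.coe_comp, Function.comp_apply, LinearEquiv.coe_coe, Submodule.mkQ_apply,
    Submodule.Quotient.restrictScalarsEquiv_symm_mk, Submodule.liftQ_apply]
  rfl

variable {φ : Coker A →ₗ[K] (κ → RatFunc K)}

lemma IsProperPartLift.apply_mem (hφ : IsProperPartLift H φ) (v : Coker A) (i : κ) :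
    φ v i ∈ strictlyProper := by
  obtain ⟨w, rfl⟩ := Submodule.mkQ_surjective _ v
  rw [hφ]
  exact properPart_mem _

lemma IsProperPartLift.apply_X_smul (hφ : IsProperPartLift H φ) (v : Coker A) (i : κ) :
    φ ((X : K[X]) • v) i = properPart (algebraMap K[X] (RatFunc K) X * φ v i) := by
  obtain ⟨w, rfl⟩ := Submodule.mkQ_surjective _ v
  have hXw : algebraMap K[X] (RatFunc K) ∘ ((X : K[X]) • w) =
      algebraMap K[X] (RatFunc K) X • (algebraMap K[X] (RatFunc K) ∘ w) := by
    ext k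
    simp
  rw [← map_smul, hφ, hφ, Function.comp_apply, Function.comp_apply, hXw, mulVec_smul,
    Pi.smul_apply, smul_eq_mul, properPart_algebraMap_mul_properPart]

noncomputable def columnCoords {ν μ : Type*} (b : Basis ν K (Coker A)) (P : Matrix ι μ K[X]) :
    Matrix ν μ K :=
  Matrix.of fun k j => b.repr (Submodule.mkQ _ (Pᵀ j)) k

lemma IsProperPartLift.mul_ratMat_eq_add {ν μ : Type*} [Fintype ν] (b : Basis ν K (Coker A))
    (hφ : IsProperPartLift H φ)
    (P : Matrix ι μ K[X]) :
    H * ratMat P = ratMat ((H * ratMat P).map polPart) +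
      Matrix.of (fun i k => φ (b k) i) * (columnCoords b P).map (algebraMap K (RatFunc K)) := by
  ext i j
  have hcol : (H * ratMat P) i j = (H *ᵥ (algebraMap K[X] (RatFunc K) ∘ Pᵀ j)) i := rfl
  have hproper : (Matrix.of (fun i k => φ (b k) i) *
      (columnCoords b P).map (algebraMap K (RatFunc K))) i j = properPart ((H * ratMat P) i j) := by
    rw [hcol, ← Function.comp_apply (f := properPart), ← hφ,
      ← b.sum_repr (Submodule.mkQ _ (Pᵀ j)), map_sum, Finset.sum_apply, mul_apply]
    simp [columnCoords, Algebra.smul_def, mul_comm]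
  rw [Matrix.add_apply, hproper]
  exact (algebraMap_polPart_add_properPart _).symm

lemma exists_matDeg_le_columnCoords_eq [DecidableEq ι] (hA : A.det ≠ 0) {ν μ : Type*} [Fintype ν]
    [Fintype μ] (b : Basis ν K (Coker A)) (Y : Matrix ν μ K) :
    ∃ P : Matrix ι μ K[X], matDeg P ≤ matDeg A - 1 ∧ columnCoords b P = Y := by
  choose w hw hdeg using fun j => exists_mkQ_eq_natDegree_le hA (b.equivFun.symm (Yᵀ j))
  refine ⟨(Matrix.of w)ᵀ, Finset.sup_le fun ij _ => hdeg ij.2 ij.1, ?_⟩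
  ext k j
  change b.repr (Submodule.mkQ _ (w j)) k = Y k j
  rw [hw, ← b.equivFun_apply, LinearEquiv.apply_symm_apply]
  rfl

lemma IsProperPartLift.isLeftCoprimeDenom_iff [DecidableEq ι] [Fintype κ] [DecidableEq κ]
    (hA : A.det ≠ 0) {ν : Type*} [Fintype ν] [DecidableEq ν] (b : Basis ν K (Coker A))
    (hφ : IsProperPartLift H φ)
    (S : Matrix κ κ K[X]) :
    IsLeftCoprimeDenom S H ↔ IsLeftCoprimeDenom S (Matrix.of fun i k => φ (b k) i) := by
  -- the expansion of `H * ratMat P` for `P = 1` and for `P = W`, whose columns lift `b`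
  obtain ⟨W, -, hW⟩ := exists_matDeg_le_columnCoords_eq hA b (1 : Matrix ν ν K)
  refine isLeftCoprimeDenom_iff_of_eq_mul_add (W := W) (Q := -(H * ratMat W).map polPart)
    (W' := (columnCoords b (1 : Matrix ι ι K[X])).map C) (Q' := H.map polPart) ?_ ?_
  · have h := hφ.mul_ratMat_eq_add b W
    rw [hW, Matrix.map_one _ (map_zero _) (map_one _), Matrix.mul_one] at h
    rw [ratMat_neg, ← sub_eq_add_neg, eq_sub_iff_add_eq']
    exact h.symm
  · have h := hφ.mul_ratMat_eq_add b (1 : Matrix ι ι K[X])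
    rw [ratMat_one, Matrix.mul_one] at h
    rw [ratMat_map_C, add_comm]
    exact h

end Realization

theorem realization_of_BAinv_general
    {n p d : ℕ} (A : Matrix (Fin n) (Fin n) (Polynomial K)) (hA : A.det ≠ 0)
    (hdegA : matDeg A < d)
    (B : Matrix (Fin p) (Fin n) (Polynomial K))
    (ν : ℕ) (hν : ν = A.det.natDegree) :
    ∃ (σ : Matrix (Fin n) (Fin p) (Polynomial K) → Matrix (Fin ν) (Fin p) K)
      (X : Matrix (Fin p) (Fin ν) K) (Ao : Matrix (Fin ν) (Fin ν) K),
      Function.Surjective σ ∧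
      (∀ Y : Matrix (Fin ν) (Fin p) K,
        ∃ P : Matrix (Fin n) (Fin p) (Polynomial K), matDeg P ≤ d - 1 ∧ σ P = Y) ∧
      (∀ P : Matrix (Fin n) (Fin p) (Polynomial K),
        ∃ Q : Matrix (Fin p) (Fin p) (Polynomial K),
          ratMat B * (ratMat A)⁻¹ * ratMat P =
            ratMat Q + X.map (algebraMap K (RatFunc K)) * (ratMat (Matrix.charmatrix Ao))⁻¹
              * (σ P).map (algebraMap K (RatFunc K))) ∧
      (∀ S : Matrix (Fin p) (Fin p) (Polynomial K),
        IsLeftCoprimeDenom S (ratMat B * (ratMat A)⁻¹) ↔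
          IsLeftCoprimeDenom S
            (X.map (algebraMap K (RatFunc K)) * (ratMat (Matrix.charmatrix Ao))⁻¹)) := by
  set H := ratMat B * (ratMat A)⁻¹
  have hHA : H * ratMat A = ratMat B := nonsing_inv_mul_cancel_right _ _ (isUnit_det_ratMat hA)
  have := finite_coker hA
  let b : Basis (Fin ν) K (Coker A) := finBasisOfFinrankEq K _ ((finrank_coker hA).trans hν.symm)
  obtain ⟨φ, hφ⟩ := exists_isProperPartLift hHA
  set T := (LinearMap.lsmul K[X] (Coker A) X).restrictScalars K
  set Ao := LinearMap.toMatrix b b T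
  set Xₒ := Matrix.of fun i k => (polPart (algebraMap K[X] (RatFunc K) X * φ (b k) i)).coeff 0
  have hΦ : Matrix.of (fun i k => φ (b k) i) =
      Xₒ.map (algebraMap K (RatFunc K)) * (ratMat (charmatrix Ao))⁻¹ := by
    rw [← of_apply_mul_ratMat_charmatrix b T φ hφ.apply_mem hφ.apply_X_smul,
      mul_nonsing_inv_cancel_right _ _ (isUnit_det_ratMat_charmatrix Ao)]
  have hbounded (Y : Matrix (Fin ν) (Fin p) K) :
      ∃ P : Matrix (Fin n) (Fin p) K[X], matDeg P ≤ d - 1 ∧ columnCoords b P = Y :=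
    (exists_matDeg_le_columnCoords_eq hA b Y).imp fun _ hP => ⟨hP.1.trans (by omega), hP.2⟩
  refine ⟨columnCoords b, Xₒ, Ao, fun Y => (hbounded Y).imp fun _ => And.right, hbounded,
    fun P => ⟨_, hΦ ▸ hφ.mul_ratMat_eq_add b P⟩, fun S => ?_⟩
  rw [← hΦ]
  exact hφ.isLeftCoprimeDenom_iff hA b S

/-- Realization of `B A⁻¹ P`: there exist a surjective `σ`, and constant
matrices `X`, `A_o`, with `B A⁻¹ P = Q + X (xI − A_o)⁻¹ σ(P)` for every `P` (with `Q`
polynomial), `σ` being surjective already on matrices of degree at most `d − 1`;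
moreover `B A⁻¹` and `X (xI − A_o)⁻¹` have the same denominators of left coprime
fraction descriptions. -/
theorem realization_of_BAinv
    {n p d : ℕ} (A : Matrix (Fin n) (Fin n) (Polynomial K)) (hA : A.det ≠ 0)
    (hdegA : matDeg A < d)
    (B : Matrix (Fin p) (Fin n) (Polynomial K))
    (ν : ℕ) (hν : ν = A.det.natDegree) (hν0 : ν ≠ 0) :
    ∃ (σ : Matrix (Fin n) (Fin p) (Polynomial K) → Matrix (Fin ν) (Fin p) K)
      (X : Matrix (Fin p) (Fin ν) K) (Ao : Matrix (Fin ν) (Fin ν) K),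
      Function.Surjective σ ∧
      (∀ Y : Matrix (Fin ν) (Fin p) K,
        ∃ P : Matrix (Fin n) (Fin p) (Polynomial K), matDeg P ≤ d - 1 ∧ σ P = Y) ∧
      (∀ P : Matrix (Fin n) (Fin p) (Polynomial K),
        ∃ Q : Matrix (Fin p) (Fin p) (Polynomial K),
          ratMat B * (ratMat A)⁻¹ * ratMat P =
            ratMat Q + X.map (algebraMap K (RatFunc K)) * (ratMat (Matrix.charmatrix Ao))⁻¹
              * (σ P).map (algebraMap K (RatFunc K))) ∧
      (∀ S : Matrix (Fin p) (Fin p) (Polynomial K),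
        IsLeftCoprimeDenom S (ratMat B * (ratMat A)⁻¹) ↔
          IsLeftCoprimeDenom S
            (X.map (algebraMap K (RatFunc K)) * (ratMat (Matrix.charmatrix Ao))⁻¹)) :=
  realization_of_BAinv_general A hA hdegA B ν hν

end PolyNull
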